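/- Let C ⊆ 𝔽^n[z] be the 𝔽[z]-span of the columns of an n×k polynomial matrix of rank k, with degree δ. Suppose (K, L, M) and (K̃, L̃, M̃) are two triples of constant matrices, with K, L, K̃, L̃ of size (δ+n−k)×δ and M, M̃ of size (δ+n−k)×n, such that each triple represents C via C = { v(z) ∈ 𝔽^n[z] : there exists x(z) ∈ 𝔽^δ[z] with zKx(z) + Lx(z) + Mv(z) = 0 } and each triple satisfies the minimality conditions: (i) K has full column rank; (ii) [K M] has full row rank; (iii) [zK+L | M] is left prime over 𝔽[z]. Then there exist unique invertible matrices T ∈ GL_{δ+n−k}(𝔽) and S ∈ GL_δ(𝔽) such that (K̃, L̃, M̃) = (TKS^{-1}, TLS^{-1}, TM). -/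

import Mathlib

open Matrix

section ConvolutionalDefs

variable {𝔽 : Type} [Field 𝔽]

/-- The left shift `(σw)_t = w_{t+1}` on bi-infinite sequences. -/
def shiftZ {A : Type} (w : ℤ → A) : ℤ → A := fun t => w (t + 1)

/-- A set of bi-infinite sequences is shift-invariant if `σX ⊆ X`. -/
def ShiftInvariant {A : Type} (X : Set (ℤ → A)) : Prop := ∀ w ∈ X, shiftZ w ∈ X

/-- A block `β` occurs in the bi-infinite sequence `w` if `β = w_j w_{j+1} … w_{j+k-1}`
for some `j ∈ ℤ`. -/
def BlockOccursIn {A : Type} (β : List A) (w : ℤ → A) : Prop :=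
  ∃ j : ℤ, ∀ l : Fin β.length, β.get l = w (j + ((l : ℕ) : ℤ))

/-- A block occurs in some element of the set `X`. -/
def OccursInSome {A : Type} (β : List A) (X : Set (ℤ → A)) : Prop :=
  ∃ w ∈ X, BlockOccursIn β w

/-- A set of sequences is irreducible if any ordered pair of blocks occurring in it can be
completed to a single block occurring in it. -/
def IrreducibleShift {A : Type} (X : Set (ℤ → A)) : Prop :=
  ∀ β γ : List A, OccursInSome β X → OccursInSome γ X →
    ∃ μ : List A, OccursInSome (β ++ μ ++ γ) X

/-- A subset of a module is `𝔽`-linear. -/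
def IsLinearSubset (𝔽 : Type) [Field 𝔽] {M : Type} [AddCommGroup M] [Module 𝔽 M]
    (C : Set M) : Prop :=
  (0 : M) ∈ C ∧ (∀ x ∈ C, ∀ y ∈ C, x + y ∈ C) ∧ ∀ (c : 𝔽), ∀ x ∈ C, c • x ∈ C

/-- A behavior `B` is complete if membership can be decided on finite windows:
any `w` which agrees on every finite interval with some element of `B` lies in `B`. -/
def CompleteBehavior {A : Type} (B : Set (ℤ → A)) : Prop :=
  ∀ w : ℤ → A, (∀ a b : ℤ, ∃ x ∈ B, ∀ t : ℤ, a ≤ t → t ≤ b → x t = w t) → w ∈ B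

/-- A behavior `B ⊆ (𝔽^n)^ℤ` is controllable if there is `ℓ ≥ 0` such that any past of a
trajectory of `B` can be concatenated, after a lag of length `ℓ`, with any future of a
trajectory of `B`. -/
def ControllableBehavior {A : Type} (B : Set (ℤ → A)) : Prop :=
  ∃ ℓ : ℕ, ∀ w ∈ B, ∀ w' ∈ B, ∀ j : ℤ, ∃ w'' ∈ B,
    (∀ t : ℤ, t ≤ j → w'' t = w t) ∧ (∀ t : ℤ, j + (ℓ : ℤ) ≤ t → w'' t = w' t)

/-- The operator `G(σ)` associated to a Laurent-polynomial matrix `G(z) = Σ_i G_i z^i`: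
`(G(σ)m)_t = Σ_i G_i m_{t+i}`. -/
noncomputable def lSigma {n k : ℕ} (G : Matrix (Fin n) (Fin k) (LaurentPolynomial 𝔽))
    (m : ℤ → Fin k → 𝔽) : ℤ → Fin n → 𝔽 :=
  fun t a => ∑ b : Fin k, (G a b).coeff.sum fun i c => c * m (t + i) b

/-- The operator `P(σ)` associated to a polynomial matrix, acting on two-sided sequences. -/
noncomputable def pSigma {n k : ℕ} (P : Matrix (Fin n) (Fin k) (Polynomial 𝔽))
    (w : ℤ → Fin k → 𝔽) : ℤ → Fin n → 𝔽 :=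
  fun t a => ∑ b : Fin k, (P a b).sum fun i c => c * w (t + (i : ℤ)) b

/-- The operator `P(σ)` associated to a polynomial matrix, acting on one-sided sequences. -/
noncomputable def pSigmaPlus {n k : ℕ} (P : Matrix (Fin n) (Fin k) (Polynomial 𝔽))
    (w : ℕ → Fin k → 𝔽) : ℕ → Fin n → 𝔽 :=
  fun t a => ∑ b : Fin k, (P a b).sum fun i c => c * w (t + i) b

/-- View a vector of formal Laurent series as a bi-infinite sequence. -/
def lsToSeq {n : ℕ} (v : Fin n → LaurentSeries 𝔽) : ℤ → Fin n → 𝔽 :=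
  fun t a => (v a).coeff t

/-- View a vector of Laurent polynomials as a (finite-support) bi-infinite sequence. -/
def lpToSeq {n : ℕ} (v : Fin n → LaurentPolynomial 𝔽) : ℤ → Fin n → 𝔽 :=
  fun t a => (v a).coeff t

/-- The pairing `(w,v) = Σ_i ⟨w_i, v_i⟩` between a bi-infinite sequence and a finite-support
(Laurent polynomial) vector. -/
noncomputable def seqPairing {n : ℕ} (w : ℤ → Fin n → 𝔽) (v : Fin n → LaurentPolynomial 𝔽) : 𝔽 :=
  ∑ a : Fin n, (v a).coeff.sum fun i c => w i a * c

/-- The `j`-th column degree of a polynomial matrix. -/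
def colDeg {n k : ℕ} (G : Matrix (Fin n) (Fin k) (Polynomial 𝔽)) (j : Fin k) : ℕ :=
  Finset.univ.sup fun i => (G i j).natDegree

/-- The `i`-th row degree of a polynomial matrix. -/
def rowDeg {r n : ℕ} (P : Matrix (Fin r) (Fin n) (Polynomial 𝔽)) (i : Fin r) : ℕ :=
  Finset.univ.sup fun j => (P i j).natDegree

/-- A polynomial `n×k` matrix is column reduced if the constant matrix of leading column
coefficients has rank `k`. -/
def ColumnReduced {n k : ℕ} (G : Matrix (Fin n) (Fin k) (Polynomial 𝔽)) : Prop :=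
  Matrix.rank (Matrix.of fun i j => (G i j).coeff (colDeg G j)) = k

/-- A polynomial `r×n` matrix is row reduced if the constant matrix of leading row
coefficients has rank `r`. -/
def RowReduced {r n : ℕ} (P : Matrix (Fin r) (Fin n) (Polynomial 𝔽)) : Prop :=
  Matrix.rank (Matrix.of fun i j => (P i j).coeff (rowDeg P i)) = r

/-- A matrix over a commutative ring is right prime if it has a left inverse over the ring. -/
def RightPrime {R : Type} [CommRing R] {m l : Type} [Fintype m] [Fintype l] [DecidableEq l]
    (G : Matrix m l R) : Prop :=
  ∃ L : Matrix l m R, L * G = 1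

/-- A matrix over a commutative ring is left prime if it has a right inverse over the ring. -/
def LeftPrime {R : Type} [CommRing R] {m l : Type} [Fintype m] [Fintype l] [DecidableEq m]
    (P : Matrix m l R) : Prop :=
  ∃ Q : Matrix l m R, P * Q = 1

end ConvolutionalDefs

/-- The first-order representation predicate: `(K, L, M)` represents the code `C` via
`C = { v ∈ 𝔽^n[z] : ∃ x ∈ 𝔽^δ[z], zKx + Lx + Mv = 0 }`. -/
def RepresentsCode {𝔽 : Type} [Field 𝔽] {n δ m : ℕ}
    (K L : Matrix (Fin m) (Fin δ) 𝔽) (M : Matrix (Fin m) (Fin n) 𝔽)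
    (C : Submodule (Polynomial 𝔽) (Fin n → Polynomial 𝔽)) : Prop :=
  (C : Set (Fin n → Polynomial 𝔽)) =
    { v : Fin n → Polynomial 𝔽 | ∃ x : Fin δ → Polynomial 𝔽,
      (Polynomial.X : Polynomial 𝔽) •
          (K.map (fun a => (Polynomial.C a : Polynomial 𝔽))).mulVec x +
        (L.map (fun a => (Polynomial.C a : Polynomial 𝔽))).mulVec x +
        (M.map (fun a => (Polynomial.C a : Polynomial 𝔽))).mulVec v = 0 }

/-- The minimality conditions for a first-order representation `(K, L, M)`:
`K` has full column rank, `[K M]` has full row rank, `[zK+L | M]` is left prime. -/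
def MinimalTriple {𝔽 : Type} [Field 𝔽] {n δ m : ℕ}
    (K L : Matrix (Fin m) (Fin δ) 𝔽) (M : Matrix (Fin m) (Fin n) 𝔽) : Prop :=
  K.rank = δ ∧
  (Matrix.fromCols K M).rank = m ∧
  LeftPrime (Matrix.fromCols
    ((Polynomial.X : Polynomial 𝔽) • K.map (fun a => (Polynomial.C a : Polynomial 𝔽)) +
      L.map (fun a => (Polynomial.C a : Polynomial 𝔽)))
    (M.map (fun a => (Polynomial.C a : Polynomial 𝔽))))

/-!
The state `x` of a solution of `zKx + Lx + Mv = 0` is determined by the output `v` because `K` is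
injective, and for a minimal representation the coefficient vectors of all states span `𝔽^δ`:
a functional vanishing on them yields a pencil annihilating every solution, which left primeness
writes as a constant multiple of `[zK + L | M]`, and the row independence of `[K M]` makes that
multiple zero. Cutting a trajectory at a time where the state of one representation vanishes shows
that the state of the other vanishes there as well, so pairing the coefficients of the two states
at equal times along the same outputs is the graph of a linear map `S`, invertible by symmetry.
Then `[zK'S + L'S | M']` annihilates every solution of the first pencil, and the same argument
turns it into `T [zK + L | M]` for a constant `T`. Uniqueness follows from the spanning property
and the row independence of `[K M]`.
-/

open Polynomial
open LinearMap (ker)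

lemma LeftPrime.exists_mul_eq {R : Type} [CommRing R] {m l k : Type} [Fintype m] [Fintype l]
    [DecidableEq m] [DecidableEq l] {P : Matrix m l R} (hP : LeftPrime P) {Y : Matrix k l R}
    (h : ∀ u, P *ᵥ u = 0 → Y *ᵥ u = 0) : ∃ Θ : Matrix k m R, Θ * P = Y := by
  obtain ⟨Q, hQ⟩ := hP
  refine ⟨Y * Q, ?_⟩
  have hP_proj : P * (1 - Q * P) = 0 := by
    rw [Matrix.mul_sub, ← Matrix.mul_assoc, hQ, Matrix.one_mul, Matrix.mul_one, sub_self]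
  have hY_proj : Y * (1 - Q * P) = 0 := Matrix.ext_iff_mulVec.mpr fun u => by
    rw [← Matrix.mulVec_mulVec, h _ (by rw [Matrix.mulVec_mulVec, hP_proj, Matrix.zero_mulVec]),
      Matrix.zero_mulVec]
  rw [Matrix.mul_sub, Matrix.mul_one, sub_eq_zero] at hY_proj
  rw [Matrix.mul_assoc, ← hY_proj]

lemma Matrix.eq_of_mul_eq_mul_of_vecMul_injective {R : Type} [CommRing R] {κ ι l : Type}
    [Fintype ι] {A₁ A₂ : Matrix κ ι R} {B : Matrix ι l R} (hB : Function.Injective B.vecMul)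
    (h : A₁ * B = A₂ * B) : A₁ = A₂ :=
  funext fun r => hB (congrFun h r)

lemma Matrix.mulVec_injective_of_rank_eq {𝕜 m n : Type} [Field 𝕜] [Fintype n]
    {A : Matrix m n 𝕜} (h : A.rank = Fintype.card n) : Function.Injective A.mulVec := by
  have hker : Module.finrank 𝕜 (ker A.mulVecLin) = 0 := by
    have := LinearMap.finrank_range_add_finrank_ker A.mulVecLin
    rw [← Matrix.rank, h, Module.finrank_fintype_fun_eq_card] at this
    omega
  rwa [Submodule.finrank_eq_zero, LinearMap.ker_eq_bot] at hker

lemma Matrix.vecMul_injective_of_rank_eq {𝕜 m n : Type} [Field 𝕜] [Fintype m] [Fintype n]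
    {A : Matrix m n 𝕜} (h : A.rank = Fintype.card m) : Function.Injective A.vecMul :=
  fun x y hxy => Matrix.mulVec_injective_of_rank_eq (A := Aᵀ) (by rwa [Matrix.rank_transpose])
    (by simpa only [Matrix.mulVec_transpose] using hxy)

lemma Matrix.eq_mul_nonsing_inv_iff {R m n : Type} [CommRing R] [Fintype n] [DecidableEq n]
    {A B : Matrix m n R} {S : Matrix n n R} (hS : IsUnit S) : B = A * S⁻¹ ↔ B * S = A := by
  have hdet := (Matrix.isUnit_iff_isUnit_det S).mp hS
  constructor
  · rintro rfl
    exact Matrix.nonsing_inv_mul_cancel_right S A hdet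
  · rintro rfl
    exact (Matrix.mul_nonsing_inv_cancel_right S B hdet).symm

lemma Submodule.exists_linearMap_eq_of_graph {R E F : Type} [Ring R] [AddCommGroup E]
    [Module R E] [AddCommGroup F] [Module R F] {g : Submodule R (E × F)}
    (hg : ∀ q ∈ g, q.1 = 0 → q.2 = 0) (hdom : g.map (LinearMap.fst R E F) = ⊤) :
    ∃ f : E →ₗ[R] F, ∀ a b, (a, b) ∈ g → f a = b := by
  refine ⟨g.toLinearPMapAux hg ∘ₗ (LinearEquiv.ofTop _ hdom).symm.toLinearMap,
    fun a b hab => ?_⟩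
  have ha : a ∈ g.map (LinearMap.fst R E F) := hdom ▸ Submodule.mem_top
  exact (Submodule.existsUnique_from_graph (fun hq h0 => hg _ hq h0) ha).unique
    (Submodule.valFromGraph_mem hg ha) hab

namespace FirstOrderRepresentation

variable {𝔽 : Type} [Field 𝔽]

lemma eq_zero_of_forall_ge_of_succ {V : Type} [Zero V] {f : ℕ → V} {t N : ℕ}
    (hN : ∀ i, N ≤ i → f i = 0) (step : ∀ i, t ≤ i → f (i + 1) = 0 → f i = 0) :
    ∀ i, t ≤ i → f i = 0 := by
  suffices ∀ d i, t ≤ i → N ≤ i + d → f i = 0 from fun i hi => this N i hi (by omega)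
  intro d
  induction d with
  | zero => exact fun i _ hi => hN i hi
  | succ d ih => exact fun i hti hi => step i hti (ih (i + 1) (by omega) (by omega))

section CoeffVec

variable {α β : Type}

noncomputable def coeffVec (i : ℕ) : (α → 𝔽[X]) →ₗ[𝔽] α → 𝔽 :=
  (lcoeff 𝔽 i).compLeft α

@[simp]
lemma coeffVec_apply (i : ℕ) (x : α → 𝔽[X]) (a : α) : coeffVec i x a = (x a).coeff i := rfl

lemma ext_coeffVec {x y : α → 𝔽[X]} (h : ∀ i, coeffVec i x = coeffVec i y) : x = y :=
  funext fun a => Polynomial.ext fun i => congrFun (h i) a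

lemma exists_coeffVec_eq_zero [Finite α] (x : α → 𝔽[X]) :
    ∃ N, ∀ i, N ≤ i → coeffVec i x = 0 := by
  have := Fintype.ofFinite α
  refine ⟨Finset.univ.sup (fun a => (x a).natDegree) + 1, fun i hi => ?_⟩
  ext a
  exact coeff_eq_zero_of_natDegree_lt
    (lt_of_le_of_lt (Finset.le_sup (f := fun a => (x a).natDegree) (Finset.mem_univ a)) hi)

lemma coeffVec_X_smul_zero (x : α → 𝔽[X]) : coeffVec 0 ((X : 𝔽[X]) • x) = 0 := by
  ext a; simp

lemma coeffVec_X_smul_succ (i : ℕ) (x : α → 𝔽[X]) :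
    coeffVec (i + 1) ((X : 𝔽[X]) • x) = coeffVec i x := by
  ext a; simp [coeff_X_mul]

lemma coeffVec_X_pow_smul_add (i j : ℕ) (x : α → 𝔽[X]) :
    coeffVec (i + j) ((X : 𝔽[X]) ^ j • x) = coeffVec i x := by
  ext a; simp [coeff_X_pow_mul']

lemma coeffVec_X_pow_smul_of_lt {i j : ℕ} (h : i < j) (x : α → 𝔽[X]) :
    coeffVec i ((X : 𝔽[X]) ^ j • x) = 0 := by
  ext a; simp [coeff_X_pow_mul', h.not_ge]

lemma coeffVec_C_smul (i : ℕ) (c : 𝔽) (x : α → 𝔽[X]) :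
    coeffVec i (C c • x) = c • coeffVec i x := by
  ext a; simp

lemma coeffVec_map_C_mulVec [Fintype β] (i : ℕ) (A : Matrix α β 𝔽) (x : β → 𝔽[X]) :
    coeffVec i (A.map C *ᵥ x) = A *ᵥ coeffVec i x := by
  ext a; simp [Matrix.mulVec, dotProduct, finsetSum_coeff, mul_comm]

lemma modByMonic_add_X_pow_smul_divByMonic (n : ℕ) (x : α → 𝔽[X]) :
    (fun a => x a %ₘ X ^ n) + (X : 𝔽[X]) ^ n • (fun a => x a /ₘ X ^ n) = x :=
  funext fun a => modByMonic_add_div (x a) _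

lemma coeffVec_modByMonic_X_pow_of_le {n i : ℕ} (hi : n ≤ i) (x : α → 𝔽[X]) :
    coeffVec i (fun a => x a %ₘ X ^ n) = 0 := by
  ext a
  refine coeff_eq_zero_of_degree_lt ((degree_modByMonic_lt _ (monic_X_pow n)).trans_le ?_)
  simpa using hi

lemma coeffVec_modByMonic_X_pow_of_lt {n i : ℕ} (hi : i < n) (x : α → 𝔽[X]) :
    coeffVec i (fun a => x a %ₘ X ^ n) = coeffVec i x := by
  conv_rhs => rw [← modByMonic_add_X_pow_smul_divByMonic n x]
  rw [map_add, coeffVec_X_pow_smul_of_lt hi, add_zero]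

end CoeffVec

section CoeffMat

variable {α β γ : Type}

noncomputable def coeffMat (i : ℕ) : Matrix α β 𝔽[X] →ₗ[𝔽] Matrix α β 𝔽 :=
  (lcoeff 𝔽 i).mapMatrix

@[simp]
lemma coeffMat_apply (i : ℕ) (Θ : Matrix α β 𝔽[X]) (a : α) (b : β) :
    coeffMat i Θ a b = (Θ a b).coeff i := rfl

lemma exists_coeffMat_eq_zero [Finite α] [Finite β] (Θ : Matrix α β 𝔽[X]) :
    ∃ N, ∀ i, N ≤ i → coeffMat i Θ = 0 := by
  obtain ⟨N, hN⟩ := exists_coeffVec_eq_zero (fun p : α × β => Θ p.1 p.2)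
  exact ⟨N, fun i hi => funext fun a => funext fun b => congrFun (hN i hi) (a, b)⟩

lemma coeffMat_X_smul_zero (Θ : Matrix α β 𝔽[X]) : coeffMat 0 ((X : 𝔽[X]) • Θ) = 0 := by
  ext r c; simp

lemma coeffMat_X_smul_succ (i : ℕ) (Θ : Matrix α β 𝔽[X]) :
    coeffMat (i + 1) ((X : 𝔽[X]) • Θ) = coeffMat i Θ := by
  ext r c; simp [coeff_X_mul]

lemma coeffMat_map_C (i : ℕ) (A : Matrix α β 𝔽) :
    coeffMat i (A.map C) = if i = 0 then A else 0 := by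
  ext r c
  rcases i with _ | i <;> simp [coeff_C]

lemma coeffMat_mul_map_C [Fintype β] (i : ℕ) (Θ : Matrix α β 𝔽[X]) (A : Matrix β γ 𝔽) :
    coeffMat i (Θ * A.map C) = coeffMat i Θ * A := by
  ext r c; simp [Matrix.mul_apply, finsetSum_coeff]

end CoeffMat

section Pencil

variable {ι σ ν : Type} [Fintype σ] [Fintype ν]

noncomputable def pencilMatrix (K L : Matrix ι σ 𝔽) (M : Matrix ι ν 𝔽) :
    Matrix ι (σ ⊕ ν) 𝔽[X] :=
  Matrix.fromCols ((X : 𝔽[X]) • K.map C + L.map C) (M.map C)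

noncomputable def pencil (K L : Matrix ι σ 𝔽) (M : Matrix ι ν 𝔽) :
    (σ → 𝔽[X]) × (ν → 𝔽[X]) →ₗ[𝔽[X]] ι → 𝔽[X] :=
  ((X : 𝔽[X]) • (K.map C).mulVecLin + (L.map C).mulVecLin) ∘ₗ LinearMap.fst _ _ _ +
    (M.map C).mulVecLin ∘ₗ LinearMap.snd _ _ _

variable {K L : Matrix ι σ 𝔽} {M : Matrix ι ν 𝔽}

lemma pencil_apply (x : σ → 𝔽[X]) (v : ν → 𝔽[X]) :
    pencil K L M (x, v) = (X : 𝔽[X]) • K.map C *ᵥ x + L.map C *ᵥ x + M.map C *ᵥ v := by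
  simp [pencil]

lemma pencilMatrix_mulVec (u : σ ⊕ ν → 𝔽[X]) :
    pencilMatrix K L M *ᵥ u = pencil K L M (u ∘ Sum.inl, u ∘ Sum.inr) := by
  conv_lhs => rw [← Sum.elim_comp_inl_inr u]
  rw [pencilMatrix, Matrix.fromCols_mulVec_sumElim, Matrix.add_mulVec, Matrix.smul_mulVec,
    pencil_apply]

lemma coeffVec_pencil_zero (x : σ → 𝔽[X]) (v : ν → 𝔽[X]) :
    coeffVec 0 (pencil K L M (x, v)) = L *ᵥ coeffVec 0 x + M *ᵥ coeffVec 0 v := by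
  simp [pencil_apply, coeffVec_X_smul_zero, coeffVec_map_C_mulVec]

lemma coeffVec_pencil_succ (i : ℕ) (x : σ → 𝔽[X]) (v : ν → 𝔽[X]) :
    coeffVec (i + 1) (pencil K L M (x, v)) =
      K *ᵥ coeffVec i x + L *ᵥ coeffVec (i + 1) x + M *ᵥ coeffVec (i + 1) v := by
  simp [pencil_apply, coeffVec_X_smul_succ, coeffVec_map_C_mulVec]

lemma pencil_mul_right {τ : Type} [Fintype τ] (S : Matrix σ τ 𝔽) (x : τ → 𝔽[X])
    (v : ν → 𝔽[X]) : pencil (K * S) (L * S) M (x, v) = pencil K L M (S.map C *ᵥ x, v) := by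
  simp only [pencil_apply, Matrix.map_mul, Matrix.mulVec_mulVec]

lemma pencil_mul_left {κ : Type} [Fintype ι] (T : Matrix κ ι 𝔽) (x : σ → 𝔽[X])
    (v : ν → 𝔽[X]) :
    pencil (T * K) (T * L) (T * M) (x, v) = T.map C *ᵥ pencil K L M (x, v) := by
  simp only [pencil_apply, Matrix.map_mul, ← Matrix.mulVec_mulVec, Matrix.mulVec_add,
    Matrix.mulVec_smul]

end Pencil

lemma representsCode_iff {n δ m : ℕ} {K L : Matrix (Fin m) (Fin δ) 𝔽}
    {M : Matrix (Fin m) (Fin n) 𝔽} {C : Submodule 𝔽[X] (Fin n → 𝔽[X])} :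
    RepresentsCode K L M C ↔ ∀ v, v ∈ C ↔ ∃ x, (x, v) ∈ ker (pencil K L M) := by
  simp [RepresentsCode, Set.ext_iff, pencil_apply]

section Solutions

variable {ι σ ν : Type} [Fintype σ] [Fintype ν] {K L : Matrix ι σ 𝔽} {M : Matrix ι ν 𝔽}

lemma coeffVec_eq_zero_of_mem_ker (hK : Function.Injective K.mulVec) {x : σ → 𝔽[X]}
    {v : ν → 𝔽[X]} (h : (x, v) ∈ ker (pencil K L M)) {t : ℕ}
    (hv : ∀ i, t < i → coeffVec i v = 0) : ∀ i, t ≤ i → coeffVec i x = 0 := by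
  obtain ⟨N, hN⟩ := exists_coeffVec_eq_zero x
  refine eq_zero_of_forall_ge_of_succ hN fun i hi hx => hK ?_
  have h' := congrArg (coeffVec (i + 1)) h
  rw [LinearMap.map_zero, coeffVec_pencil_succ, hx, hv (i + 1) (by omega)] at h'
  simpa using h'

lemma fst_eq_of_mem_ker (hK : Function.Injective K.mulVec) {x₁ x₂ : σ → 𝔽[X]}
    {v : ν → 𝔽[X]} (h₁ : (x₁, v) ∈ ker (pencil K L M)) (h₂ : (x₂, v) ∈ ker (pencil K L M)) :
    x₁ = x₂ := by
  have h : (x₁ - x₂, 0) ∈ ker (pencil K L M) := by simpa using sub_mem h₁ h₂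
  refine sub_eq_zero.mp (ext_coeffVec fun i => ?_)
  simpa using coeffVec_eq_zero_of_mem_ker hK h (t := 0) (by simp) i (Nat.zero_le i)

lemma exists_split_of_coeffVec_eq_zero {x : σ → 𝔽[X]} {v : ν → 𝔽[X]}
    (h : (x, v) ∈ ker (pencil K L M)) {t : ℕ} (ht : coeffVec t x = 0) :
    ∃ p₀ ∈ ker (pencil K L M), ∃ p₁ ∈ ker (pencil K L M),
      (∀ i, t < i → coeffVec i p₀.2 = 0) ∧ (x, v) = p₀ + (X : 𝔽[X]) ^ (t + 1) • p₁ := by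
  set p₀ : (σ → 𝔽[X]) × (ν → 𝔽[X]) := (fun a => x a %ₘ X ^ (t + 1), fun a => v a %ₘ X ^ (t + 1))
  set p₁ : (σ → 𝔽[X]) × (ν → 𝔽[X]) := (fun a => x a /ₘ X ^ (t + 1), fun a => v a /ₘ X ^ (t + 1))
  have hsplit : (x, v) = p₀ + (X : 𝔽[X]) ^ (t + 1) • p₁ := by
    simp only [p₀, p₁, Prod.smul_mk, Prod.mk_add_mk, modByMonic_add_X_pow_smul_divByMonic]
  have h₀ : p₀ ∈ ker (pencil K L M) := by
    refine ext_coeffVec fun i => ?_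
    rcases i with _ | i
    · rw [coeffVec_pencil_zero, coeffVec_modByMonic_X_pow_of_lt t.succ_pos,
        coeffVec_modByMonic_X_pow_of_lt t.succ_pos, ← coeffVec_pencil_zero, h, map_zero]
    rcases lt_trichotomy i t with hi | rfl | hi
    · rw [coeffVec_pencil_succ, coeffVec_modByMonic_X_pow_of_lt (by omega),
        coeffVec_modByMonic_X_pow_of_lt (by omega), coeffVec_modByMonic_X_pow_of_lt (by omega),
        ← coeffVec_pencil_succ, h, map_zero]
    -- at time `t + 1` only the term `K x_t` survives the truncation, and it vanishes
    · rw [coeffVec_pencil_succ, coeffVec_modByMonic_X_pow_of_lt i.lt_succ_self, ht,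
        coeffVec_modByMonic_X_pow_of_le le_rfl, coeffVec_modByMonic_X_pow_of_le le_rfl]
      simp
    · rw [coeffVec_pencil_succ, coeffVec_modByMonic_X_pow_of_le hi,
        coeffVec_modByMonic_X_pow_of_le (by omega), coeffVec_modByMonic_X_pow_of_le (by omega)]
      simp
  have h₁ : p₁ ∈ ker (pencil K L M) := by
    have h' := h
    rw [LinearMap.mem_ker, hsplit, map_add, h₀, zero_add, map_smul] at h'
    exact (smul_eq_zero.mp h').resolve_left (pow_ne_zero _ X_ne_zero)
  exact ⟨p₀, h₀, p₁, h₁, fun i hi => coeffVec_modByMonic_X_pow_of_le hi _, hsplit⟩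

end Solutions

section Minimal

variable {ι σ ν : Type} [Fintype ι] [DecidableEq ι] [Fintype σ] [Fintype ν]
  {K L : Matrix ι σ 𝔽} {M : Matrix ι ν 𝔽}

/-- Left primeness gives a polynomial `Θ` with `Θ [zK + L | M] = [zK₂ + L₂ | M₂]`; comparing
coefficients from the top down, the row independence of `[K M]` kills every coefficient of `Θ`
but the constant one. -/
theorem exists_mul_eq_of_ker_le (hKM : Function.Injective (Matrix.fromCols K M).vecMul)
    (hP : LeftPrime (pencilMatrix K L M)) {κ : Type} [Fintype κ] {K₂ L₂ : Matrix κ σ 𝔽}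
    {M₂ : Matrix κ ν 𝔽} (h : ker (pencil K L M) ≤ ker (pencil K₂ L₂ M₂)) :
    ∃ T : Matrix κ ι 𝔽, T * K = K₂ ∧ T * L = L₂ ∧ T * M = M₂ := by
  classical
  obtain ⟨Θ, hΘ⟩ := hP.exists_mul_eq (Y := pencilMatrix K₂ L₂ M₂) fun u hu => by
    rw [pencilMatrix_mulVec] at hu ⊢
    exact h hu
  rw [pencilMatrix, pencilMatrix, Matrix.mul_fromCols] at hΘ
  obtain ⟨hKL, hM⟩ := Matrix.fromCols_inj hΘ
  rw [Matrix.mul_add, Matrix.mul_smul] at hKL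
  have hKL_coeff (i : ℕ) :
      coeffMat i Θ * K + coeffMat (i + 1) Θ * L = if i = 0 then K₂ else 0 := by
    simpa [coeffMat_X_smul_succ, coeffMat_mul_map_C, coeffMat_map_C] using
      congrArg (coeffMat (i + 1)) hKL
  have hM_coeff (i : ℕ) : coeffMat i Θ * M = if i = 0 then M₂ else 0 := by
    rw [← coeffMat_mul_map_C, hM, coeffMat_map_C]
  obtain ⟨N, hN⟩ := exists_coeffMat_eq_zero Θ
  have hvanish : ∀ i, 1 ≤ i → coeffMat i Θ = 0 :=
    eq_zero_of_forall_ge_of_succ hN fun i hi hzero => by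
      refine Matrix.eq_of_mul_eq_mul_of_vecMul_injective hKM ?_
      have hK := hKL_coeff i
      rw [hzero, Matrix.zero_mul, add_zero, if_neg (by omega)] at hK
      rw [Matrix.mul_fromCols, hK, hM_coeff, if_neg (by omega), Matrix.fromCols_zero,
        Matrix.zero_mul]
  refine ⟨coeffMat 0 Θ, ?_, ?_, by simpa using hM_coeff 0⟩
  · simpa [hvanish 1 le_rfl] using hKL_coeff 0
  · simpa [coeffMat_X_smul_zero, coeffMat_mul_map_C, coeffMat_map_C] using
      congrArg (coeffMat 0) hKL

theorem eq_top_of_forall_coeffVec_mem (hKM : Function.Injective (Matrix.fromCols K M).vecMul)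
    (hP : LeftPrime (pencilMatrix K L M)) {W : Submodule 𝔽 (σ → 𝔽)}
    (hW : ∀ p ∈ ker (pencil K L M), ∀ i, coeffVec i p.1 ∈ W) : W = ⊤ := by
  classical
  by_contra hne
  obtain ⟨f, hf, hfW⟩ := W.exists_dual_map_eq_bot_of_lt_top (lt_top_iff_ne_top.mpr hne)
    inferInstance
  set c := (dotProductEquiv 𝔽 σ).symm f
  have hc (y : σ → 𝔽) : c ⬝ᵥ y = f y := by
    rw [← dotProductEquiv_apply_apply, LinearEquiv.apply_symm_apply]
  have hle : ker (pencil K L M) ≤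
      ker (pencil (0 : Matrix Unit σ 𝔽) (Matrix.replicateRow Unit c) (0 : Matrix Unit ν 𝔽)) := by
    rintro ⟨x, v⟩ hp
    refine ext_coeffVec fun i => ?_
    have hfi : f (coeffVec i x) = 0 := by
      have := Submodule.mem_map_of_mem (f := f) (hW _ hp i)
      rwa [hfW, Submodule.mem_bot] at this
    simp [pencil_apply, coeffVec_map_C_mulVec, Matrix.replicateRow_mulVec_eq_const, hc, hfi]
  obtain ⟨T, hTK, hTL, hTM⟩ := exists_mul_eq_of_ker_le hKM hP hle
  have hT : T = 0 := Matrix.eq_of_mul_eq_mul_of_vecMul_injective hKM (by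
    rw [Matrix.mul_fromCols, hTK, hTM, Matrix.fromCols_zero, Matrix.zero_mul])
  have hc0 : c = 0 := funext fun r => by
    simpa [hT] using (congrFun (congrFun hTL ()) r).symm
  exact hf (LinearMap.ext fun y => by rw [← hc, hc0, zero_dotProduct, LinearMap.zero_apply])

theorem eq_of_forall_map_C_mulVec_eq (hKM : Function.Injective (Matrix.fromCols K M).vecMul)
    (hP : LeftPrime (pencilMatrix K L M)) {τ : Type} {A B : Matrix τ σ 𝔽}
    (h : ∀ p ∈ ker (pencil K L M), A.map C *ᵥ p.1 = B.map C *ᵥ p.1) : A = B := by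
  have htop : ker (A - B).mulVecLin = ⊤ :=
    eq_top_of_forall_coeffVec_mem hKM hP fun p hp i => by
      simp [← coeffVec_map_C_mulVec, h p hp]
  exact sub_eq_zero.mp (Matrix.ext_iff_mulVec.mpr fun u => by
    simpa [Matrix.sub_mulVec] using LinearMap.congr_fun (LinearMap.ker_eq_top.mp htop) u)

end Minimal

section Transfer

variable {ι σ ν ι' σ' : Type} [Fintype σ] [Fintype ν] [Fintype σ']
  {K L : Matrix ι σ 𝔽} {M : Matrix ι ν 𝔽} {K' L' : Matrix ι' σ' 𝔽} {M' : Matrix ι' ν 𝔽}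

/-- Cut the trajectory after time `t`: both pieces are trajectories of the first representation,
and the states of the second representation along them vanish from time `t` on, respectively up
to time `t`. -/
theorem coeffVec_eq_zero_of_coeffVec_eq_zero (hK' : Function.Injective K'.mulVec)
    (hout : ∀ p ∈ ker (pencil K L M), ∃ x', (x', p.2) ∈ ker (pencil K' L' M'))
    {x : σ → 𝔽[X]} {x' : σ' → 𝔽[X]} {v : ν → 𝔽[X]} (h : (x, v) ∈ ker (pencil K L M))
    (h' : (x', v) ∈ ker (pencil K' L' M')) {t : ℕ} (ht : coeffVec t x = 0) :
    coeffVec t x' = 0 := by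
  obtain ⟨p₀, h₀, p₁, h₁, hp₀, hsplit⟩ := exists_split_of_coeffVec_eq_zero h ht
  obtain ⟨y₀, hy₀⟩ := hout p₀ h₀
  obtain ⟨y₁, hy₁⟩ := hout p₁ h₁
  have hy : (y₀ + (X : 𝔽[X]) ^ (t + 1) • y₁, v) ∈ ker (pencil K' L' M') := by
    rw [show v = p₀.2 + (X : 𝔽[X]) ^ (t + 1) • p₁.2 from congrArg Prod.snd hsplit]
    simpa using add_mem hy₀ (Submodule.smul_mem _ ((X : 𝔽[X]) ^ (t + 1)) hy₁)
  rw [fst_eq_of_mem_ker hK' h' hy, map_add, coeffVec_eq_zero_of_mem_ker hK' hy₀ hp₀ t le_rfl,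
    coeffVec_X_pow_smul_of_lt t.lt_succ_self, add_zero]

variable (K L M K' L' M') in
def statePairs : Submodule 𝔽 ((σ → 𝔽) × (σ' → 𝔽)) where
  carrier := {q | ∃ x x' v i, (x, v) ∈ ker (pencil K L M) ∧ (x', v) ∈ ker (pencil K' L' M') ∧
    q = (coeffVec i x, coeffVec i x')}
  zero_mem' := ⟨0, 0, 0, 0, zero_mem _, zero_mem _, by simp [Prod.zero_eq_mk]⟩
  add_mem' := by
    rintro _ _ ⟨x₁, x₁', v₁, i, h₁, h₁', rfl⟩ ⟨x₂, x₂', v₂, j, h₂, h₂', rfl⟩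
    -- shift the two trajectories in time so that both coefficients sit at time `i + j`
    refine ⟨X ^ j • x₁ + X ^ i • x₂, X ^ j • x₁' + X ^ i • x₂', X ^ j • v₁ + X ^ i • v₂, i + j,
      by simpa using add_mem (Submodule.smul_mem _ (X ^ j) h₁) (Submodule.smul_mem _ (X ^ i) h₂),
      by simpa using add_mem (Submodule.smul_mem _ (X ^ j) h₁') (Submodule.smul_mem _ (X ^ i) h₂'),
      ?_⟩
    simp only [map_add, coeffVec_X_pow_smul_add, Prod.mk_add_mk]
    rw [add_comm i j, coeffVec_X_pow_smul_add, coeffVec_X_pow_smul_add]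
  smul_mem' := by
    rintro c _ ⟨x, x', v, i, h, h', rfl⟩
    exact ⟨C c • x, C c • x', C c • v, i, by simpa using Submodule.smul_mem _ (C c) h,
      by simpa using Submodule.smul_mem _ (C c) h', by simp [coeffVec_C_smul]⟩

theorem exists_transfer [Fintype ι] [DecidableEq ι]
    (hKM : Function.Injective (Matrix.fromCols K M).vecMul) (hP : LeftPrime (pencilMatrix K L M))
    (hK' : Function.Injective K'.mulVec)
    (hout : ∀ p ∈ ker (pencil K L M), ∃ x', (x', p.2) ∈ ker (pencil K' L' M')) :
    ∃ S : Matrix σ' σ 𝔽, ∀ x x' v, (x, v) ∈ ker (pencil K L M) →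
      (x', v) ∈ ker (pencil K' L' M') → S.map C *ᵥ x = x' := by
  classical
  have hgraph : ∀ q ∈ statePairs K L M K' L' M', q.1 = 0 → q.2 = 0 := by
    rintro _ ⟨x, x', v, i, h, h', rfl⟩ hq
    exact coeffVec_eq_zero_of_coeffVec_eq_zero hK' hout h h' hq
  have hdom : (statePairs K L M K' L' M').map (LinearMap.fst 𝔽 _ _) = ⊤ :=
    eq_top_of_forall_coeffVec_mem hKM hP fun p hp i => by
      obtain ⟨x', h'⟩ := hout p hp
      exact ⟨_, ⟨p.1, x', p.2, i, hp, h', rfl⟩, rfl⟩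
  obtain ⟨f, hf⟩ := Submodule.exists_linearMap_eq_of_graph hgraph hdom
  refine ⟨LinearMap.toMatrix' f, fun x x' v h h' => ext_coeffVec fun i => ?_⟩
  rw [coeffVec_map_C_mulVec, LinearMap.toMatrix'_mulVec]
  exact hf _ _ ⟨x, x', v, i, h, h', rfl⟩

lemma map_C_mulVec_eq_of_mul_eq [Fintype ι] [Fintype ι'] (hK' : Function.Injective K'.mulVec)
    {T : Matrix ι' ι 𝔽} {S : Matrix σ' σ 𝔽} (hK : T * K = K' * S) (hL : T * L = L' * S)
    (hM : T * M = M') {x : σ → 𝔽[X]} {x' : σ' → 𝔽[X]} {v : ν → 𝔽[X]}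
    (h : (x, v) ∈ ker (pencil K L M)) (h' : (x', v) ∈ ker (pencil K' L' M')) :
    S.map C *ᵥ x = x' := by
  refine fst_eq_of_mem_ker hK' ?_ h'
  rw [LinearMap.mem_ker, ← pencil_mul_right, ← hK, ← hL, ← hM, pencil_mul_left, h,
    Matrix.mulVec_zero]

end Transfer

section Similarity

variable {ι σ ν : Type} [Fintype ι] [DecidableEq ι] [Fintype σ] [Fintype ν]

structure IsMinimal (K L : Matrix ι σ 𝔽) (M : Matrix ι ν 𝔽) : Prop where
  injective_mulVec : Function.Injective K.mulVec
  injective_vecMul_fromCols : Function.Injective (Matrix.fromCols K M).vecMul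
  leftPrime : LeftPrime (pencilMatrix K L M)

variable {K L K' L' : Matrix ι σ 𝔽} {M M' : Matrix ι ν 𝔽}

theorem exists_intertwiner (h : IsMinimal K L M) (hK' : Function.Injective K'.mulVec)
    (hout : ∀ p ∈ ker (pencil K L M), ∃ x', (x', p.2) ∈ ker (pencil K' L' M')) :
    ∃ (T : Matrix ι ι 𝔽) (S : Matrix σ σ 𝔽), T * K = K' * S ∧ T * L = L' * S ∧ T * M = M' ∧
      ∀ p ∈ ker (pencil K L M), ∀ x', (x', p.2) ∈ ker (pencil K' L' M') →
        S.map C *ᵥ p.1 = x' := by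
  obtain ⟨S, hS⟩ := exists_transfer h.injective_vecMul_fromCols h.leftPrime hK' hout
  obtain ⟨T, hT⟩ := exists_mul_eq_of_ker_le h.injective_vecMul_fromCols h.leftPrime
    (K₂ := K' * S) (L₂ := L' * S) (M₂ := M') fun p hp => by
      obtain ⟨x', hx'⟩ := hout p hp
      rw [LinearMap.mem_ker, pencil_mul_right, hS _ _ _ hp hx']
      exact hx'
  exact ⟨T, S, hT.1, hT.2.1, hT.2.2, fun p hp x' hx' => hS _ _ _ hp hx'⟩

theorem exists_isUnit_intertwiner [DecidableEq σ] (h : IsMinimal K L M)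
    (h' : IsMinimal K' L' M')
    (hout : ∀ v, (∃ x, (x, v) ∈ ker (pencil K L M)) ↔ ∃ x', (x', v) ∈ ker (pencil K' L' M')) :
    ∃ (T : Matrix ι ι 𝔽) (S : Matrix σ σ 𝔽),
      IsUnit T ∧ IsUnit S ∧ T * K = K' * S ∧ T * L = L' * S ∧ T * M = M' := by
  have hout₁ : ∀ p ∈ ker (pencil K L M), ∃ x', (x', p.2) ∈ ker (pencil K' L' M') :=
    fun p hp => (hout p.2).mp ⟨p.1, hp⟩
  have hout₂ : ∀ p ∈ ker (pencil K' L' M'), ∃ x, (x, p.2) ∈ ker (pencil K L M) :=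
    fun p hp => (hout p.2).mpr ⟨p.1, hp⟩
  obtain ⟨T, S, hTK, hTL, hTM, hS⟩ := exists_intertwiner h h'.injective_mulVec hout₁
  obtain ⟨T', S', hTK', -, hTM', hS'⟩ := exists_intertwiner h' h.injective_mulVec hout₂
  have hS'S : S' * S = 1 := eq_of_forall_map_C_mulVec_eq h.injective_vecMul_fromCols h.leftPrime
    fun p hp => by
      obtain ⟨x', hx'⟩ := hout₁ p hp
      rw [Matrix.map_mul, ← Matrix.mulVec_mulVec, hS p hp x' hx', hS' (x', p.2) hx' p.1 hp]
      simp
  have hT'T : T' * T = 1 := by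
    refine Matrix.eq_of_mul_eq_mul_of_vecMul_injective h.injective_vecMul_fromCols ?_
    rw [Matrix.mul_fromCols, Matrix.mul_fromCols, Matrix.mul_assoc, Matrix.mul_assoc, hTK, hTM,
      ← Matrix.mul_assoc, hTK', hTM', Matrix.mul_assoc, hS'S, Matrix.mul_one, Matrix.one_mul,
      Matrix.one_mul]
  exact ⟨T, S, .of_mul_eq_one_right T' hT'T, .of_mul_eq_one_right S' hS'S, hTK, hTL, hTM⟩

theorem intertwiner_unique (h : IsMinimal K L M) (hK' : Function.Injective K'.mulVec)
    (hout : ∀ p ∈ ker (pencil K L M), ∃ x', (x', p.2) ∈ ker (pencil K' L' M'))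
    {T₁ T₂ : Matrix ι ι 𝔽} {S₁ S₂ : Matrix σ σ 𝔽}
    (h₁ : T₁ * K = K' * S₁ ∧ T₁ * L = L' * S₁ ∧ T₁ * M = M')
    (h₂ : T₂ * K = K' * S₂ ∧ T₂ * L = L' * S₂ ∧ T₂ * M = M') : T₁ = T₂ ∧ S₁ = S₂ := by
  have hS : S₁ = S₂ := eq_of_forall_map_C_mulVec_eq h.injective_vecMul_fromCols h.leftPrime
    fun p hp => by
      obtain ⟨x', hx'⟩ := hout p hp
      rw [map_C_mulVec_eq_of_mul_eq hK' h₁.1 h₁.2.1 h₁.2.2 hp hx',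
        map_C_mulVec_eq_of_mul_eq hK' h₂.1 h₂.2.1 h₂.2.2 hp hx']
  refine ⟨Matrix.eq_of_mul_eq_mul_of_vecMul_injective h.injective_vecMul_fromCols ?_, hS⟩
  rw [Matrix.mul_fromCols, Matrix.mul_fromCols, h₁.1, h₂.1, hS, h₁.2.2, h₂.2.2]

end Similarity

lemma MinimalTriple.isMinimal {n δ m : ℕ} {K L : Matrix (Fin m) (Fin δ) 𝔽}
    {M : Matrix (Fin m) (Fin n) 𝔽} (h : MinimalTriple K L M) : IsMinimal K L M :=
  ⟨Matrix.mulVec_injective_of_rank_eq (by simpa using h.1),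
    Matrix.vecMul_injective_of_rank_eq (by simpa using h.2.1), h.2.2⟩

end FirstOrderRepresentation

open FirstOrderRepresentation in
theorem first_order_representation_unique_general
    (𝔽 : Type) [Field 𝔽] (n k : ℕ)
    (C : Submodule (Polynomial 𝔽) (Fin n → Polynomial 𝔽))
    (δ : ℕ)
    (K L K' L' : Matrix (Fin (δ + (n - k))) (Fin δ) 𝔽)
    (M M' : Matrix (Fin (δ + (n - k))) (Fin n) 𝔽)
    (hrep : RepresentsCode K L M C) (hmin : MinimalTriple K L M)
    (hrep' : RepresentsCode K' L' M' C) (hmin' : MinimalTriple K' L' M') :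
    ∃ (T : Matrix (Fin (δ + (n - k))) (Fin (δ + (n - k))) 𝔽)
      (S : Matrix (Fin δ) (Fin δ) 𝔽),
      IsUnit T ∧ IsUnit S ∧
      K' = T * K * S⁻¹ ∧ L' = T * L * S⁻¹ ∧ M' = T * M ∧
      ∀ (T₁ : Matrix (Fin (δ + (n - k))) (Fin (δ + (n - k))) 𝔽)
        (S₁ : Matrix (Fin δ) (Fin δ) 𝔽),
        IsUnit T₁ → IsUnit S₁ →
        K' = T₁ * K * S₁⁻¹ → L' = T₁ * L * S₁⁻¹ → M' = T₁ * M →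
        T₁ = T ∧ S₁ = S := by
  have hout (v : Fin n → 𝔽[X]) :
      (∃ x, (x, v) ∈ ker (pencil K L M)) ↔ ∃ x', (x', v) ∈ ker (pencil K' L' M') :=
    (representsCode_iff.mp hrep v).symm.trans (representsCode_iff.mp hrep' v)
  obtain ⟨T, S, hT, hS, hK, hL, hM⟩ :=
    exists_isUnit_intertwiner hmin.isMinimal hmin'.isMinimal hout
  refine ⟨T, S, hT, hS, (Matrix.eq_mul_nonsing_inv_iff hS).mpr hK.symm,
    (Matrix.eq_mul_nonsing_inv_iff hS).mpr hL.symm, hM.symm, fun T₁ S₁ _ hS₁ hK₁ hL₁ hM₁ => ?_⟩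
  exact intertwiner_unique hmin.isMinimal hmin'.isMinimal.injective_mulVec
    (fun p hp => (hout p.2).mp ⟨p.1, hp⟩)
    ⟨((Matrix.eq_mul_nonsing_inv_iff hS₁).mp hK₁).symm,
      ((Matrix.eq_mul_nonsing_inv_iff hS₁).mp hL₁).symm, hM₁.symm⟩ ⟨hK, hL, hM⟩

/-- Uniqueness of minimal first-order representations: two minimal triples
`(K,L,M)` and `(K̃,L̃,M̃)` representing the same code `C` of degree `δ` are related by unique
invertible constant matrices `T, S` via `(K̃,L̃,M̃) = (TKS⁻¹, TLS⁻¹, TM)`. -/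
theorem first_order_representation_unique
    (𝔽 : Type) [Field 𝔽] [Fintype 𝔽] (n k : ℕ)
    (G : Matrix (Fin n) (Fin k) (Polynomial 𝔽))
    (hG : LinearIndependent (Polynomial 𝔽) Gᵀ)
    (C : Submodule (Polynomial 𝔽) (Fin n → Polynomial 𝔽))
    (hC : C = Submodule.span (Polynomial 𝔽) (Set.range Gᵀ))
    -- the degree `δ` of `C`, computed from any column-reduced encoder
    (U : Matrix (Fin k) (Fin k) (Polynomial 𝔽)) (hU : IsUnit U)
    (hGU : ColumnReduced (G * U))
    (δ : ℕ) (hδ : δ = ∑ j : Fin k, colDeg (G * U) j)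
    (K L K' L' : Matrix (Fin (δ + (n - k))) (Fin δ) 𝔽)
    (M M' : Matrix (Fin (δ + (n - k))) (Fin n) 𝔽)
    (hrep : RepresentsCode K L M C) (hmin : MinimalTriple K L M)
    (hrep' : RepresentsCode K' L' M' C) (hmin' : MinimalTriple K' L' M') :
    ∃ (T : Matrix (Fin (δ + (n - k))) (Fin (δ + (n - k))) 𝔽)
      (S : Matrix (Fin δ) (Fin δ) 𝔽),
      IsUnit T ∧ IsUnit S ∧
      K' = T * K * S⁻¹ ∧ L' = T * L * S⁻¹ ∧ M' = T * M ∧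
      ∀ (T₁ : Matrix (Fin (δ + (n - k))) (Fin (δ + (n - k))) 𝔽)
        (S₁ : Matrix (Fin δ) (Fin δ) 𝔽),
        IsUnit T₁ → IsUnit S₁ →
        K' = T₁ * K * S₁⁻¹ → L' = T₁ * L * S₁⁻¹ → M' = T₁ * M →
        T₁ = T ∧ S₁ = S :=
  first_order_representation_unique_general 𝔽 n k C δ K L K' L' M M' hrep hmin hrep' hmin'
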